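/- Let d ≥ 1 and let ν be a positive Borel measure on ℝ^d with ν({0}) = 0. For ε > 0 define ν_ε(A) = ν(εA), where εA = {εx : x ∈ A}, and assume each ν_ε is admissible; set C_ε = ∫_{ℝ^d} min(1,|x|) ν_ε(dx) and assume C_ε > 0. Suppose the function ℓ(s) = ν({x : |x| > s}) is finite and positive for small s > 0 and is slowly varying at zero, i.e. for every λ > 0, ℓ(λs)/ℓ(s) → 1 as s → 0⁺. Let E ⊂ ℝ^d be a Borel set of finite Lebesgue measure whose covariance function g_E is Lipschitz continuous (this holds whenever E also has finite classical perimeter). Then lim_{ε→0⁺} C_ε^{−1} Per_{ν_ε}(E) = |E|. -/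

import Mathlib

/-!
By Fubini, `Per_{ν_ε}(E) = ∫ (|E| - g_E(-y)) ν_ε(dy)`, and `C_ε = ∫_{|y| ≤ 1} |y| ν_ε(dy) + ℓ(ε)`
with `ℓ(s) = ν {|x| > s}`. Slow variation makes the first moment `∫_{|y| ≤ 1} |y| ν_ε(dy)` of order
`o(ℓ(ε))`: near the origin `ℓ` at most doubles when the radius is divided by `4`, so dyadic shells
give a geometric series, and on `δ < |y| ≤ 1` the mass is `ℓ(δε) - ℓ(ε) = o(ℓ(ε))`. Hence
`C_ε ~ ℓ(ε)`. The integrand `|E| - g_E(-y)` is at most `L |y|` and at most `|E|`, and tends to `|E|`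
as `|y| → ∞`, so `Per_{ν_ε}(E) ~ |E| ℓ(ε)`.
-/

open MeasureTheory Filter Topology ENNReal NNReal

/-- The non-local `ν`-perimeter: `Per_ν(E) = ∫_E ν(Eᶜ − x) dx`. -/
noncomputable def nuPer {d : ℕ} (ν : Measure (EuclideanSpace ℝ (Fin d)))
    (E : Set (EuclideanSpace ℝ (Fin d))) : ℝ≥0∞ :=
  ∫⁻ x in E, ν {y | x + y ∈ Eᶜ}

/-- The covariance function `g_E(y) = |E ∩ (E + y)|` of a set `E`. -/
noncomputable def covFn {d : ℕ} (E : Set (EuclideanSpace ℝ (Fin d)))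
    (y : EuclideanSpace ℝ (Fin d)) : ℝ≥0∞ :=
  volume (E ∩ {x | x - y ∈ E})

/-- The rescaled measure `ν_ε(A) = ν(εA)`, realized as the pushforward of `ν`
under `x ↦ ε⁻¹ x`. -/
noncomputable def rescale {d : ℕ} (ν : Measure (EuclideanSpace ℝ (Fin d)))
    (ε : ℝ) : Measure (EuclideanSpace ℝ (Fin d)) :=
  Measure.map (fun x => ε⁻¹ • x) ν

lemma ENNReal.div_div_div_cancel_right {a b c : ℝ≥0∞} (hc₀ : c ≠ 0) (hc : c ≠ ⊤) :
    a / c / (b / c) = a / b := by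
  rw [div_eq_mul_inv, ENNReal.inv_div (Or.inl hc) (Or.inl hc₀), div_eq_mul_inv, div_eq_mul_inv,
    div_eq_mul_inv, show a * c⁻¹ * (c * b⁻¹) = a * (c⁻¹ * c) * b⁻¹ by ring,
    ENNReal.inv_mul_cancel hc₀ hc, mul_one]

section NormedSpace

variable {W : Type*} [NormedAddCommGroup W] [MeasurableSpace W]

lemma sigmaFinite_of_tail_lt_top (μ : Measure W) (h : ∀ s > (0 : ℝ), μ {x | s < ‖x‖} < ⊤)
    (h0 : μ {0} = 0) : SigmaFinite μ := by
  refine ⟨⟨⟨fun n : ℕ => {x | 1 / (n + 1 : ℝ) < ‖x‖} ∪ {0}, fun _ => trivial, fun n => ?_, ?_⟩⟩⟩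
  · exact (measure_union_le _ _).trans_lt <| by
      rw [h0, add_zero]; exact h _ Nat.one_div_pos_of_nat
  · refine Set.eq_univ_of_forall fun x => Set.mem_iUnion.2 ?_
    rcases eq_or_ne x 0 with rfl | hx
    · exact ⟨0, Or.inr rfl⟩
    · obtain ⟨n, hn⟩ := exists_nat_one_div_lt (norm_pos_iff.2 hx)
      exact ⟨n, Or.inl hn⟩

lemma eventually_forall_Ioc_of_eventually_nhdsGT {p : ℝ → Prop}
    (h : ∀ᶠ s in 𝓝[>] (0 : ℝ), p s) : ∀ᶠ u in 𝓝[>] (0 : ℝ), ∀ s ∈ Set.Ioc 0 u, p s := by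
  obtain ⟨u₀, hu₀, hsub⟩ := mem_nhdsGT_iff_exists_Ioo_subset.1 h
  filter_upwards [Ioo_mem_nhdsGT hu₀] with u hu s hs
  exact hsub ⟨hs.1, hs.2.trans_lt hu.2⟩

structure HasSlowlyVaryingTail (μ : Measure W) : Prop where
  eventually_pos_lt_top : ∀ᶠ s in 𝓝[>] (0 : ℝ), 0 < μ {x | s < ‖x‖} ∧ μ {x | s < ‖x‖} < ⊤
  tendsto_div : ∀ c > (0 : ℝ),
    Tendsto (fun s => μ {x | c * s < ‖x‖} / μ {x | s < ‖x‖}) (𝓝[>] 0) (𝓝 1)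

namespace HasSlowlyVaryingTail

lemma tail_lt_top {μ : Measure W} (h : HasSlowlyVaryingTail μ) {s : ℝ} (hs : 0 < s) :
    μ {x | s < ‖x‖} < ⊤ := by
  obtain ⟨t, ht, hts⟩ := (h.eventually_pos_lt_top.and (Ioo_mem_nhdsGT hs)).exists
  exact (measure_mono fun x (hx : s < ‖x‖) => hts.2.trans hx).trans_lt ht.2

lemma eventually_tail_div_four_le {μ : Measure W} (h : HasSlowlyVaryingTail μ) :
    ∀ᶠ s in 𝓝[>] (0 : ℝ), μ {x | s / 4 < ‖x‖} ≤ 2 * μ {x | s < ‖x‖} := by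
  filter_upwards [(tendsto_order.1 (h.tendsto_div 4⁻¹ (by norm_num))).2 2 one_lt_two,
    h.eventually_pos_lt_top] with s hs hpos
  rw [ENNReal.div_lt_iff (Or.inl hpos.1.ne') (Or.inl hpos.2.ne)] at hs
  rw [div_eq_inv_mul]
  exact hs.le

end HasSlowlyVaryingTail

variable [OpensMeasurableSpace W]

lemma measurableSet_lt_norm (s : ℝ) : MeasurableSet {x : W | s < ‖x‖} :=
  measurableSet_lt measurable_const measurable_norm

lemma measurableSet_norm_le (s : ℝ) : MeasurableSet {x : W | ‖x‖ ≤ s} :=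
  measurableSet_le measurable_norm measurable_const

lemma lintegral_min_one_norm_eq (μ : Measure W) :
    ∫⁻ y, ENNReal.ofReal (min 1 ‖y‖) ∂μ
      = ∫⁻ y in {y | ‖y‖ ≤ 1}, ENNReal.ofReal ‖y‖ ∂μ + μ {y | 1 < ‖y‖} := by
  rw [← lintegral_add_compl _ (measurableSet_norm_le 1)]
  have hcompl : {y : W | ‖y‖ ≤ 1}ᶜ = {y | 1 < ‖y‖} := by ext; simp
  rw [hcompl, ← setLIntegral_one]
  congr 1
  · exact setLIntegral_congr_fun (measurableSet_norm_le 1) fun y hy => by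
      rw [min_eq_right (show ‖y‖ ≤ 1 from hy)]
  · exact setLIntegral_congr_fun (measurableSet_lt_norm 1) fun y hy => by
      rw [min_eq_left (show 1 < ‖y‖ from hy).le, ENNReal.ofReal_one]

/-- Sum over the shells `δ / 4 ^ (k + 1) < ‖y‖ ≤ δ / 4 ^ k`: the `k`-th one has radius `δ / 4 ^ k`
and mass at most `2 ^ (k + 1)` times the tail at `δ`, giving a geometric series. -/
lemma lintegral_norm_le_of_tail_doubling (μ : Measure W) {δ : ℝ} (hδ : 0 < δ)
    (hdbl : ∀ s ∈ Set.Ioc 0 δ, μ {x | s / 4 < ‖x‖} ≤ 2 * μ {x | s < ‖x‖}) :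
    ∫⁻ y in {y | ‖y‖ ≤ δ}, ENNReal.ofReal ‖y‖ ∂μ ≤ 4 * ENNReal.ofReal δ * μ {x | δ < ‖x‖} := by
  set r : ℕ → ℝ := fun k => δ / 4 ^ k
  set shell : ℕ → Set W := fun k => {y | r (k + 1) < ‖y‖} ∩ {y | ‖y‖ ≤ r k}
  have hr_succ (k : ℕ) : r (k + 1) = r k / 4 := by simp only [r, pow_succ, div_div]
  have hr_mem (k : ℕ) : r k ∈ Set.Ioc 0 δ :=
    ⟨by positivity, div_le_self hδ.le (one_le_pow₀ (by norm_num))⟩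
  have htail (k : ℕ) : μ {x | r k < ‖x‖} ≤ 2 ^ k * μ {x | δ < ‖x‖} := by
    induction k with
    | zero => simp [r]
    | succ k ih =>
      calc μ {x | r (k + 1) < ‖x‖} ≤ 2 * μ {x | r k < ‖x‖} := by
            rw [hr_succ]; exact hdbl _ (hr_mem k)
        _ ≤ 2 * (2 ^ k * μ {x | δ < ‖x‖}) := by gcongr
        _ = 2 ^ (k + 1) * μ {x | δ < ‖x‖} := by ring
  have hcover (y : W) : {y | ‖y‖ ≤ δ}.indicator (fun y => ENNReal.ofReal ‖y‖) y
      ≤ ∑' k, (shell k).indicator (fun _ => ENNReal.ofReal (r k)) y := by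
    by_cases hy : ‖y‖ ≤ δ
    swap
    · simp [hy]
    rcases eq_or_ne y 0 with rfl | hy0
    · rw [Set.indicator_of_mem (s := {y : W | ‖y‖ ≤ δ}) hy, norm_zero, ENNReal.ofReal_zero]
      exact zero_le
    have hy_pos : 0 < ‖y‖ := norm_pos_iff.2 hy0
    obtain ⟨k, hk_le, hk_lt⟩ := exists_nat_pow_near (x := δ / ‖y‖) (y := (4 : ℝ))
      ((one_le_div hy_pos).2 hy) (by norm_num)
    have hyk : y ∈ shell k := by
      refine ⟨?_, ?_⟩
      · show δ / 4 ^ (k + 1) < ‖y‖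
        rwa [div_lt_iff₀ (by positivity), mul_comm, ← div_lt_iff₀ hy_pos]
      · show ‖y‖ ≤ δ / 4 ^ k
        rwa [le_div_iff₀ (by positivity), mul_comm, ← le_div_iff₀ hy_pos]
    calc {y | ‖y‖ ≤ δ}.indicator (fun y => ENNReal.ofReal ‖y‖) y = ENNReal.ofReal ‖y‖ :=
          Set.indicator_of_mem (s := {y : W | ‖y‖ ≤ δ}) hy _
      _ ≤ ENNReal.ofReal (r k) := ENNReal.ofReal_le_ofReal hyk.2
      _ = (shell k).indicator (fun _ => ENNReal.ofReal (r k)) y :=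
          (Set.indicator_of_mem hyk (fun _ => ENNReal.ofReal (r k))).symm
      _ ≤ ∑' k, (shell k).indicator (fun _ => ENNReal.ofReal (r k)) y := ENNReal.le_tsum k
  have hshell (k : ℕ) : MeasurableSet (shell k) :=
    (measurableSet_lt_norm _).inter (measurableSet_norm_le _)
  have hterm (k : ℕ) : ENNReal.ofReal (r k) * μ (shell k)
      ≤ 2 * ENNReal.ofReal δ * μ {x | δ < ‖x‖} * 2⁻¹ ^ k := by
    have hr : ENNReal.ofReal (r k) = ENNReal.ofReal δ * 4⁻¹ ^ k := by
      rw [ENNReal.ofReal_div_of_pos (by positivity), ENNReal.ofReal_pow (by norm_num),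
        ENNReal.ofReal_ofNat, div_eq_mul_inv, ENNReal.inv_pow]
    have hquarter : (4 : ℝ≥0∞)⁻¹ * 2 = 2⁻¹ := by
      rw [show (4 : ℝ≥0∞) = 2 * 2 by norm_num, ENNReal.mul_inv (by simp) (by simp), mul_assoc,
        ENNReal.inv_mul_cancel (by simp) (by simp), mul_one]
    calc ENNReal.ofReal (r k) * μ (shell k)
        ≤ ENNReal.ofReal (r k) * (2 ^ (k + 1) * μ {x | δ < ‖x‖}) :=
          mul_le_mul_right ((measure_mono Set.inter_subset_left).trans (htail (k + 1))) _
      _ = 2 * ENNReal.ofReal δ * μ {x | δ < ‖x‖} * ((4 : ℝ≥0∞)⁻¹ * 2) ^ k := by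
          rw [hr]; ring
      _ = 2 * ENNReal.ofReal δ * μ {x | δ < ‖x‖} * 2⁻¹ ^ k := by rw [hquarter]
  calc ∫⁻ y in {y | ‖y‖ ≤ δ}, ENNReal.ofReal ‖y‖ ∂μ
      = ∫⁻ y, {y | ‖y‖ ≤ δ}.indicator (fun y => ENNReal.ofReal ‖y‖) y ∂μ :=
        (lintegral_indicator (measurableSet_norm_le δ) _).symm
    _ ≤ ∫⁻ y, ∑' k, (shell k).indicator (fun _ => ENNReal.ofReal (r k)) y ∂μ :=
        lintegral_mono hcover
    _ = ∑' k, ENNReal.ofReal (r k) * μ (shell k) := by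
        rw [lintegral_tsum fun k => (aemeasurable_const.indicator (hshell k))]
        simp only [lintegral_indicator_const (hshell _)]
    _ ≤ ∑' k, 2 * ENNReal.ofReal δ * μ {x | δ < ‖x‖} * 2⁻¹ ^ k := ENNReal.tsum_le_tsum hterm
    _ = 4 * ENNReal.ofReal δ * μ {x | δ < ‖x‖} := by
        rw [ENNReal.tsum_mul_left, ENNReal.tsum_geometric, ENNReal.one_sub_inv_two, inv_inv]
        ring

lemma lintegral_norm_unitBall_le (μ : Measure W) {δ : ℝ} (hδ : 0 < δ) (hδ1 : δ ≤ 1)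
    (hdbl : ∀ s ∈ Set.Ioc 0 δ, μ {x | s / 4 < ‖x‖} ≤ 2 * μ {x | s < ‖x‖})
    (h1 : μ {x | 1 < ‖x‖} ≠ ⊤) :
    ∫⁻ y in {y | ‖y‖ ≤ 1}, ENNReal.ofReal ‖y‖ ∂μ
      ≤ 4 * ENNReal.ofReal δ * μ {x | δ < ‖x‖} + (μ {x | δ < ‖x‖} - μ {x | 1 < ‖x‖}) := by
  have hsplit : {y : W | ‖y‖ ≤ 1} ⊆ {y | ‖y‖ ≤ δ} ∪ ({y | δ < ‖y‖} \ {y | 1 < ‖y‖}) := by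
    intro y hy
    by_cases hyδ : ‖y‖ ≤ δ
    · exact Or.inl hyδ
    · exact Or.inr ⟨lt_of_not_ge hyδ, fun hy1 : 1 < ‖y‖ => not_le.2 hy1 hy⟩
  have hmiddle : ∫⁻ y in {y | δ < ‖y‖} \ {y | 1 < ‖y‖}, ENNReal.ofReal ‖y‖ ∂μ
      ≤ μ {x | δ < ‖x‖} - μ {x | 1 < ‖x‖} := by
    calc ∫⁻ y in {y | δ < ‖y‖} \ {y | 1 < ‖y‖}, ENNReal.ofReal ‖y‖ ∂μ
        ≤ ∫⁻ _ in {y | δ < ‖y‖} \ {y | 1 < ‖y‖}, 1 ∂μ :=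
          setLIntegral_mono measurable_const fun y hy =>
            ENNReal.ofReal_le_one.2 (not_lt.1 hy.2)
      _ = μ {x | δ < ‖x‖} - μ {x | 1 < ‖x‖} := by
          rw [setLIntegral_one, measure_sdiff
            (show {x : W | 1 < ‖x‖} ⊆ {x | δ < ‖x‖} from fun x hx => hδ1.trans_lt hx)
            (measurableSet_lt_norm 1).nullMeasurableSet h1]
  calc ∫⁻ y in {y | ‖y‖ ≤ 1}, ENNReal.ofReal ‖y‖ ∂μ
      ≤ ∫⁻ y in {y | ‖y‖ ≤ δ} ∪ ({y | δ < ‖y‖} \ {y | 1 < ‖y‖}), ENNReal.ofReal ‖y‖ ∂μ :=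
        lintegral_mono_set hsplit
    _ ≤ _ := (lintegral_union_le _ _ _).trans
        (add_le_add (lintegral_norm_le_of_tail_doubling μ hδ hdbl) hmiddle)

end NormedSpace

lemma tendsto_measure_diff_closedBall {α : Type*} [PseudoMetricSpace α] [MeasurableSpace α]
    [OpensMeasurableSpace α] (μ : Measure α) {s : Set α} (hs : MeasurableSet s) (hμs : μ s ≠ ⊤)
    (x : α) : Tendsto (fun n : ℕ => μ (s \ Metric.closedBall x n)) atTop (𝓝 0) := by
  have hlim := tendsto_measure_iInter_atTop (μ := μ) (s := fun n : ℕ => s \ Metric.closedBall x n)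
    (fun n : ℕ => (hs.diff Metric.isClosed_closedBall.measurableSet).nullMeasurableSet)
    (fun m n hmn => Set.sdiff_subset_sdiff_right (Metric.closedBall_subset_closedBall
      (Nat.cast_le.2 hmn)))
    ⟨0, ((measure_mono Set.sdiff_subset).trans_lt hμs.lt_top).ne⟩
  have hempty : ⋂ n : ℕ, s \ Metric.closedBall x n = ∅ := by
    simp_rw [Set.sdiff_eq, ← Set.inter_iInter, Set.iInter_eq_compl_iUnion_compl, compl_compl,
      Metric.iUnion_closedBall_nat, Set.compl_univ, Set.inter_empty]
  rwa [hempty, measure_empty] at hlim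

section Euclidean

variable {d : ℕ}

local notation "V" => EuclideanSpace ℝ (Fin d)

instance {ν : Measure V} [SFinite ν] (ε : ℝ) : SFinite (rescale ν ε) := by
  unfold rescale
  infer_instance

lemma rescale_apply_lt_norm (ν : Measure V) {ε : ℝ} (hε : 0 < ε) (s : ℝ) :
    rescale ν ε {x | s < ‖x‖} = ν {x | s * ε < ‖x‖} := by
  rw [rescale, Measure.map_apply (measurable_const_smul _) (measurableSet_lt_norm s)]
  congr 1
  ext x
  simp only [Set.mem_preimage, Set.mem_ofPred_eq, norm_smul, norm_inv, Real.norm_eq_abs,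
    abs_of_pos hε]
  rw [lt_inv_mul_iff₀ hε, mul_comm]

lemma covFn_le_volume (E : Set V) (y : V) : covFn E y ≤ volume E :=
  measure_mono Set.inter_subset_left

lemma covFn_zero (E : Set V) : covFn E 0 = volume E := by
  simp [covFn]

lemma volume_sub_covFn_le {E : Set V} (hEvol : volume E < ⊤) {L : ℝ≥0}
    (hLip : LipschitzWith L fun y => (covFn E y).toReal) (z : V) :
    volume E - covFn E z ≤ L * ENNReal.ofReal ‖z‖ := by
  have hdist := hLip.dist_le_mul 0 z
  rw [dist_zero_left, covFn_zero, Real.dist_eq] at hdist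
  have hz : covFn E z ≠ ⊤ := ((covFn_le_volume E z).trans_lt hEvol).ne
  rw [← ENNReal.ofReal_toReal hEvol.ne, ← ENNReal.ofReal_toReal hz,
    ← ENNReal.ofReal_sub _ ENNReal.toReal_nonneg, ← ENNReal.ofReal_coe_nnreal,
    ← ENNReal.ofReal_mul L.coe_nonneg]
  exact ENNReal.ofReal_le_ofReal ((le_abs_self _).trans hdist)

/-- A point of `E ∩ (E + z)` is far from the origin, or is `z` plus a point far from it. -/
lemma covFn_le_two_mul_volume_diff_closedBall (E : Set V) {R : ℝ} {z : V} (hz : 2 * R < ‖z‖) :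
    covFn E z ≤ 2 * volume (E \ Metric.closedBall 0 R) := by
  set S := E \ Metric.closedBall (0 : V) R
  have hsub : E ∩ {x | x - z ∈ E} ⊆ S ∪ (fun x => x + -z) ⁻¹' S := by
    rintro x ⟨hx, hxz⟩
    by_cases hxR : ‖x‖ ≤ R
    · refine Or.inr ⟨by simpa [← sub_eq_add_neg] using hxz, ?_⟩
      have := norm_sub_norm_le z x
      rw [norm_sub_rev] at this
      simp only [Metric.mem_closedBall, dist_zero_right, not_le, ← sub_eq_add_neg]
      linarith
    · exact Or.inl ⟨hx, by simpa using hxR⟩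
  calc covFn E z ≤ volume (S ∪ (fun x => x + -z) ⁻¹' S) := measure_mono hsub
    _ ≤ volume S + volume ((fun x => x + -z) ⁻¹' S) := measure_union_le _ _
    _ = 2 * volume S := by rw [measure_preimage_add_right, two_mul]

lemma exists_covFn_le {E : Set V} (hE : MeasurableSet E) (hEvol : volume E < ⊤) {η : ℝ≥0∞}
    (hη : 0 < η) : ∃ M > (0 : ℝ), ∀ z : V, M < ‖z‖ → covFn E z ≤ η := by
  obtain ⟨n, hn⟩ := ((tendsto_order.1 (tendsto_measure_diff_closedBall volume hE hEvol.ne 0)).2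
    _ (ENNReal.half_pos hη.ne')).exists
  refine ⟨2 * n + 1, by positivity, fun z hz => ?_⟩
  calc covFn E z ≤ 2 * volume (E \ Metric.closedBall 0 n) :=
        covFn_le_two_mul_volume_diff_closedBall E (by linarith)
    _ ≤ 2 * (η / 2) := by gcongr
    _ = η := ENNReal.mul_div_cancel two_ne_zero ofNat_ne_top

lemma volume_restrict_add_mem_compl {E : Set V} (hE : MeasurableSet E) (hEvol : volume E < ⊤)
    (y : V) : volume.restrict E {x | x + y ∈ Eᶜ} = volume E - covFn E (-y) := by
  have hF : MeasurableSet {x : V | x + y ∈ E} := hE.preimage (measurable_add_const y)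
  have hF' : MeasurableSet {x : V | x + y ∈ Eᶜ} := hE.compl.preimage (measurable_add_const y)
  have hset : {x : V | x + y ∈ Eᶜ} ∩ E = E \ (E ∩ {x | x + y ∈ E}) := by
    ext x
    simp [and_comm]
  rw [Measure.restrict_apply hF', hset, measure_sdiff Set.inter_subset_left
    (hE.inter hF).nullMeasurableSet ((measure_mono Set.inter_subset_left).trans_lt hEvol).ne]
  simp [covFn]

lemma nuPer_eq_lintegral (μ : Measure V) [SFinite μ] {E : Set V} (hE : MeasurableSet E)
    (hEvol : volume E < ⊤) : nuPer μ E = ∫⁻ y, (volume E - covFn E (-y)) ∂μ := by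
  have hS : MeasurableSet {p : V × V | p.1 + p.2 ∈ Eᶜ} := hE.compl.preimage measurable_add
  calc nuPer μ E = (volume.restrict E).prod μ {p : V × V | p.1 + p.2 ∈ Eᶜ} :=
        (Measure.prod_apply hS).symm
    _ = ∫⁻ y, volume.restrict E {x | x + y ∈ Eᶜ} ∂μ := Measure.prod_apply_symm hS
    _ = ∫⁻ y, (volume E - covFn E (-y)) ∂μ :=
        lintegral_congr fun y => volume_restrict_add_mem_compl hE hEvol y

lemma nuPer_le_of_lipschitz {E : Set V} (μ : Measure V) [SFinite μ] (hE : MeasurableSet E)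
    (hEvol : volume E < ⊤) {L : ℝ≥0} (hLip : LipschitzWith L fun y => (covFn E y).toReal) :
    nuPer μ E ≤ L * ∫⁻ y in {y | ‖y‖ ≤ 1}, ENNReal.ofReal ‖y‖ ∂μ
      + volume E * μ {y | 1 < ‖y‖} := by
  have hcompl : {y : V | ‖y‖ ≤ 1}ᶜ = {y | 1 < ‖y‖} := by ext; simp
  rw [nuPer_eq_lintegral μ hE hEvol, ← lintegral_add_compl _ (measurableSet_norm_le 1), hcompl,
    ← lintegral_const_mul' _ _ ENNReal.coe_ne_top, ← setLIntegral_const]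
  gcongr with y
  · simpa only [norm_neg] using volume_sub_covFn_le hEvol hLip (-y)
  · exact tsub_le_self

lemma le_nuPer_of_covFn_le {E : Set V} (μ : Measure V) [SFinite μ] (hE : MeasurableSet E)
    (hEvol : volume E < ⊤) {η : ℝ≥0∞} {M : ℝ} (hM : ∀ z : V, M < ‖z‖ → covFn E z ≤ η) :
    (volume E - η) * μ {y | M < ‖y‖} ≤ nuPer μ E := by
  rw [nuPer_eq_lintegral μ hE hEvol, ← setLIntegral_const]
  refine (setLIntegral_mono' (measurableSet_lt_norm M) fun y hy => ?_).trans
    (setLIntegral_le_lintegral _ _)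
  exact tsub_le_tsub_left (hM (-y) (by rwa [norm_neg])) _

namespace HasSlowlyVaryingTail

lemma tendsto_lintegral_norm_rescale_div {ν : Measure V} (h : HasSlowlyVaryingTail ν) :
    Tendsto (fun ε => (∫⁻ y in {y : V | ‖y‖ ≤ 1}, ENNReal.ofReal ‖y‖ ∂rescale ν ε)
      / ν {x | ε < ‖x‖}) (𝓝[>] 0) (𝓝 0) := by
  refine ENNReal.tendsto_nhds_zero.2 fun η hη => ?_
  obtain ⟨r, -, hr0, hrη⟩ := ENNReal.lt_iff_exists_real_btwn.1 hη
  have hr : 0 < r := ENNReal.ofReal_pos.1 hr0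
  set δ := min 1 (r / 4)
  have hδ : 0 < δ := lt_min one_pos (by positivity)
  have hδη : 4 * ENNReal.ofReal δ < η := by
    refine lt_of_le_of_lt ?_ hrη
    rw [← ENNReal.ofReal_ofNat 4, ← ENNReal.ofReal_mul (by norm_num)]
    exact ENNReal.ofReal_le_ofReal (by linarith [min_le_right 1 (r / 4)])
  have hratio := h.tendsto_div δ hδ
  have hlim : Tendsto (fun ε => 4 * ENNReal.ofReal δ * (ν {x | δ * ε < ‖x‖} / ν {x | ε < ‖x‖})
      + (ν {x | δ * ε < ‖x‖} / ν {x | ε < ‖x‖} - 1)) (𝓝[>] 0)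
      (𝓝 (4 * ENNReal.ofReal δ * 1 + (1 - 1))) :=
    (ENNReal.Tendsto.const_mul hratio (Or.inl one_ne_zero)).add
      (ENNReal.Tendsto.sub hratio tendsto_const_nhds (Or.inl one_ne_top))
  rw [mul_one, tsub_self, add_zero] at hlim
  filter_upwards [(tendsto_order.1 hlim).2 η hδη, h.eventually_pos_lt_top,
    eventually_nhdsGT_zero_mul_left hδ
      (eventually_forall_Ioc_of_eventually_nhdsGT h.eventually_tail_div_four_le),
    self_mem_nhdsWithin] with ε hbound hpos hdbl hε
  have hdbl_ε : ∀ s ∈ Set.Ioc 0 δ,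
      rescale ν ε {x | s / 4 < ‖x‖} ≤ 2 * rescale ν ε {x | s < ‖x‖} := by
    intro s hs
    rw [rescale_apply_lt_norm ν hε, rescale_apply_lt_norm ν hε, div_mul_eq_mul_div]
    exact hdbl _ ⟨mul_pos hs.1 hε, mul_le_mul_of_nonneg_right hs.2 (le_of_lt hε)⟩
  have hI := lintegral_norm_unitBall_le (rescale ν ε) hδ (min_le_left _ _) hdbl_ε
    (by rw [rescale_apply_lt_norm ν hε, one_mul]; exact hpos.2.ne)
  rw [rescale_apply_lt_norm ν hε, rescale_apply_lt_norm ν hε, one_mul] at hI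
  refine le_trans ?_ hbound.le
  calc (∫⁻ y in {y : V | ‖y‖ ≤ 1}, ENNReal.ofReal ‖y‖ ∂rescale ν ε) / ν {x | ε < ‖x‖}
      ≤ (4 * ENNReal.ofReal δ * ν {x | δ * ε < ‖x‖}
          + (ν {x | δ * ε < ‖x‖} - ν {x | ε < ‖x‖})) / ν {x | ε < ‖x‖} :=
        ENNReal.div_le_div_right hI _
    _ = _ := by
        rw [ENNReal.add_div, mul_div_assoc, ENNReal.sub_div fun _ _ => hpos.1.ne',
          ENNReal.div_self hpos.1.ne' hpos.2.ne]

lemma tendsto_lintegral_min_one_norm_rescale_div {ν : Measure V} (h : HasSlowlyVaryingTail ν) :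
    Tendsto (fun ε => (∫⁻ y, ENNReal.ofReal (min 1 ‖y‖) ∂rescale ν ε) / ν {x | ε < ‖x‖})
      (𝓝[>] 0) (𝓝 1) := by
  have hlim := h.tendsto_lintegral_norm_rescale_div.add (tendsto_const_nhds (x := (1 : ℝ≥0∞)))
  rw [zero_add] at hlim
  refine hlim.congr' ?_
  filter_upwards [h.eventually_pos_lt_top, self_mem_nhdsWithin] with ε hpos hε
  rw [lintegral_min_one_norm_eq, rescale_apply_lt_norm ν hε, one_mul, ENNReal.add_div,
    ENNReal.div_self hpos.1.ne' hpos.2.ne]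

lemma tendsto_nuPer_rescale_div {ν : Measure V} (h : HasSlowlyVaryingTail ν) [SFinite ν]
    {E : Set V} (hE : MeasurableSet E) (hEvol : volume E < ⊤) {L : ℝ≥0}
    (hLip : LipschitzWith L fun y => (covFn E y).toReal) :
    Tendsto (fun ε => nuPer (rescale ν ε) E / ν {x | ε < ‖x‖}) (𝓝[>] 0) (𝓝 (volume E)) := by
  refine tendsto_order.2 ⟨fun a ha => ?_, fun b hb => ?_⟩
  · obtain ⟨c, hac, hcE⟩ := exists_between ha
    obtain ⟨M, hM0, hM⟩ := exists_covFn_le hE hEvol (tsub_pos_of_lt hcE)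
    have hlim : Tendsto (fun ε => c * (ν {x | M * ε < ‖x‖} / ν {x | ε < ‖x‖})) (𝓝[>] 0)
        (𝓝 (c * 1)) := ENNReal.Tendsto.const_mul (h.tendsto_div M hM0) (Or.inl one_ne_zero)
    rw [mul_one] at hlim
    filter_upwards [(tendsto_order.1 hlim).1 a hac, self_mem_nhdsWithin] with ε hlt hε
    refine hlt.trans_le ?_
    have hlow := le_nuPer_of_covFn_le (rescale ν ε) hE hEvol hM
    rw [ENNReal.sub_sub_cancel hEvol.ne hcE.le, rescale_apply_lt_norm ν hε] at hlow
    rw [← mul_div_assoc]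
    exact ENNReal.div_le_div_right hlow _
  · have hlim := (ENNReal.Tendsto.const_mul h.tendsto_lintegral_norm_rescale_div
      (Or.inr ENNReal.coe_ne_top) (a := L)).add (tendsto_const_nhds (x := volume E))
    rw [mul_zero, zero_add] at hlim
    filter_upwards [(tendsto_order.1 hlim).2 b hb, h.eventually_pos_lt_top,
      self_mem_nhdsWithin] with ε hlt hpos hε
    refine lt_of_le_of_lt ?_ hlt
    have hup := nuPer_le_of_lipschitz (rescale ν ε) hE hEvol hLip
    rw [rescale_apply_lt_norm ν hε, one_mul] at hup
    calc nuPer (rescale ν ε) E / ν {x | ε < ‖x‖}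
        ≤ (L * ∫⁻ y in {y : V | ‖y‖ ≤ 1}, ENNReal.ofReal ‖y‖ ∂rescale ν ε
          + volume E * ν {x | ε < ‖x‖}) / ν {x | ε < ‖x‖} := ENNReal.div_le_div_right hup _
      _ = _ := by
          rw [ENNReal.add_div, mul_div_assoc, mul_div_assoc,
            ENNReal.div_self hpos.1.ne' hpos.2.ne, mul_one]

end HasSlowlyVaryingTail

end Euclidean

theorem statement14_general {d : ℕ}
    (ν : Measure (EuclideanSpace ℝ (Fin d))) (hν0 : ν {0} = 0)
    (C : ℝ → ℝ≥0∞)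
    (hC : ∀ ε, C ε = ∫⁻ x, ENNReal.ofReal (min 1 ‖x‖) ∂(rescale ν ε))
    (hℓ : ∃ s₀ > (0 : ℝ), ∀ s ∈ Set.Ioo (0 : ℝ) s₀,
      0 < ν {x | s < ‖x‖} ∧ ν {x | s < ‖x‖} < ⊤)
    (hslow : ∀ c > (0 : ℝ),
      Tendsto (fun s => ν {x | c * s < ‖x‖} / ν {x | s < ‖x‖})
        (𝓝[>] (0 : ℝ)) (𝓝 1))
    (E : Set (EuclideanSpace ℝ (Fin d)))
    (hE : MeasurableSet E) (hEvol : volume E < ⊤)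
    (hLip : ∃ L : ℝ≥0, LipschitzWith L fun y => (covFn E y).toReal) :
    Tendsto (fun ε => (C ε)⁻¹ * nuPer (rescale ν ε) E) (𝓝[>] (0 : ℝ))
      (𝓝 (volume E)) := by
  obtain ⟨L, hL⟩ := hLip
  obtain ⟨s₀, hs₀, hℓs₀⟩ := hℓ
  have h : HasSlowlyVaryingTail ν :=
    ⟨eventually_of_mem (Ioo_mem_nhdsGT hs₀) hℓs₀, hslow⟩
  have := sigmaFinite_of_tail_lt_top ν (fun _ hs => h.tail_lt_top hs) hν0
  have hPer := h.tendsto_nuPer_rescale_div hE hEvol hL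
  have hCℓ := h.tendsto_lintegral_min_one_norm_rescale_div
  simp only [← hC] at hCℓ
  have hlim := ENNReal.Tendsto.div hPer (Or.inr one_ne_zero) hCℓ (Or.inl one_ne_top)
  rw [div_one] at hlim
  refine hlim.congr' ?_
  filter_upwards [h.eventually_pos_lt_top] with ε hpos
  rw [ENNReal.div_div_div_cancel_right hpos.1.ne' hpos.2.ne, ENNReal.div_eq_inv_mul]

/-- If the tail function `ℓ(s) = ν({|x| > s})` is finite and positive near zero and
slowly varying at zero, then for the rescaled measures `ν_ε(A) = ν(εA)` and any Borel
set `E` of finite Lebesgue measure with Lipschitz covariance function,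
`C_ε⁻¹ Per_{ν_ε}(E) → |E|` where `C_ε = ∫ min(1,|x|) ν_ε(dx)`. -/
theorem statement14 {d : ℕ} (hd : 1 ≤ d)
    (ν : Measure (EuclideanSpace ℝ (Fin d))) (hν0 : ν {0} = 0)
    (hadm : ∀ ε > (0 : ℝ),
      (∫⁻ x, ENNReal.ofReal (min 1 ‖x‖) ∂(rescale ν ε)) < ⊤)
    (C : ℝ → ℝ≥0∞)
    (hC : ∀ ε, C ε = ∫⁻ x, ENNReal.ofReal (min 1 ‖x‖) ∂(rescale ν ε))
    (hCpos : ∀ ε > (0 : ℝ), 0 < C ε)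
    (hℓ : ∃ s₀ > (0 : ℝ), ∀ s ∈ Set.Ioo (0 : ℝ) s₀,
      0 < ν {x | s < ‖x‖} ∧ ν {x | s < ‖x‖} < ⊤)
    (hslow : ∀ c > (0 : ℝ),
      Tendsto (fun s => ν {x | c * s < ‖x‖} / ν {x | s < ‖x‖})
        (𝓝[>] (0 : ℝ)) (𝓝 1))
    (E : Set (EuclideanSpace ℝ (Fin d)))
    (hE : MeasurableSet E) (hEvol : volume E < ⊤)
    (hLip : ∃ L : ℝ≥0, LipschitzWith L fun y => (covFn E y).toReal) :
    Tendsto (fun ε => (C ε)⁻¹ * nuPer (rescale ν ε) E) (𝓝[>] (0 : ℝ))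
      (𝓝 (volume E)) :=
  statement14_general ν hν0 C hC hℓ hslow E hE hEvol hLip
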